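/- arXiv:2006.05988 — 6 statements merged into one kernel-verified Lean document; each statement's English description precedes it below -/
import Mathlib

section
/- Suppose there exist constants $a, b, c \ge 0$ with $b > 0$ and nonnegative real sequences $(s_t)_{t=0}^T$, $(q_t)_{t=0}^T$ such that $s_{t+1} \le (1+a)s_t - b q_t + c$ for all $0 \le t \le T-1$. Then $\min_{0 \le t \le T-1} q_t \le \frac{(1+a)^T}{bT}s_0 + \frac{c}{b}$. -/
/-- Recursion-solving lemma for the non-convex analysis:
if `s_{t+1} ≤ (1+a) s_t - b q_t + c`, then
`min_{t<T} q_t ≤ (1+a)^T / (bT) * s_0 + c/b`. -/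
theorem nonconvex_recursion_solution
    (T : ℕ) (hT : 1 ≤ T) (a b c : ℝ) (ha : 0 ≤ a) (hb : 0 < b) (hc : 0 ≤ c)
    (s q : ℕ → ℝ) (hs : ∀ t ≤ T, 0 ≤ s t) (hq : ∀ t ≤ T, 0 ≤ q t)
    (hrec : ∀ t < T, s (t + 1) ≤ (1 + a) * s t - b * q t + c) :
    (Finset.range T).inf' (Finset.nonempty_range_iff.mpr (by omega)) q
      ≤ (1 + a) ^ T / (b * T) * s 0 + c / b := by
  set m := (Finset.range T).inf' (Finset.nonempty_range_iff.mpr (by omega)) q with hm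
  have hm_le : ∀ t < T, m ≤ q t := fun t ht =>
    Finset.inf'_le q (Finset.mem_range.mpr ht)
  have hTpos : (0:ℝ) < T := by exact_mod_cast hT
  have hs0 : 0 ≤ s 0 := hs 0 (by omega)
  have hbT : (0:ℝ) < b * T := by positivity
  by_cases hcase : b * m - c ≤ 0
  · have h1 : m ≤ c / b := by
      rw [le_div_iff₀ hb]; nlinarith
    have h2 : 0 ≤ (1 + a) ^ T / (b * T) * s 0 := by positivity
    linarith
  · push_neg at hcase
    have key : ∀ t, t ≤ T → s t ≤ (1 + a) ^ t * s 0 - t * (b * m - c) := by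
      intro t
      induction t with
      | zero => simp
      | succ n ih =>
        intro hn
        have hn' : n < T := hn
        have h1 := hrec n hn'
        have h2 := ih (le_of_lt hn')
        have h3 := hm_le n hn'
        have hpow : (0:ℝ) ≤ (1 + a) ^ n := by positivity
        have hcn : (0:ℝ) ≤ (n:ℝ) := Nat.cast_nonneg n
        push_cast
        have hps : (1 + a) ^ (n + 1) = (1 + a) * (1 + a) ^ n := by ring
        nlinarith [mul_le_mul_of_nonneg_left h2 (by linarith : (0:ℝ) ≤ 1 + a),
          mul_nonneg (mul_nonneg ha hcn) (le_of_lt hcase),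
          mul_le_mul_of_nonneg_left h3 (le_of_lt hb)]
    have hsT := hs T le_rfl
    have hkey := key T le_rfl
    have h4 : m ≤ ((1 + a) ^ T * s 0 + c * T) / (b * T) := by
      rw [le_div_iff₀ hbT]; nlinarith
    have hb' : b ≠ 0 := ne_of_gt hb
    have hT0 : (T:ℝ) ≠ 0 := ne_of_gt hTpos
    calc m ≤ ((1 + a) ^ T * s 0 + c * T) / (b * T) := h4
      _ = (1 + a) ^ T / (b * T) * s 0 + c / b := by field_simp
end

section
/- Let $f_1,\dots,f_n : \mathbb{R}^d \to \mathbb{R}$ be $\mu$-strongly convex and $L$-smooth with minimizer $x_\ast$ of $f = \frac{1}{n}\sum_i f_i$, let $\sigma_\ast^2 = \frac{1}{n}\sum_{i=1}^n \|\nabla f_i(x_\ast)\|^2$, and let $\gamma > 0$. For a uniformly random permutation $\pi$ of $\{1,\dots,n\}$ define $x_\ast^i = x_\ast - \gamma\sum_{j=0}^{i-1}\nabla f_{\pi_j}(x_\ast)$ and $\sigma_{\mathrm{Shuffle}}^2 = \max_{1 \le i \le n-1}\frac{1}{\gamma}\mathbb{E}[D_{f_{\pi_i}}(x_\ast^i,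 x_\ast)]$. Then $\frac{\gamma\mu n}{8}\sigma_\ast^2 \le \sigma_{\mathrm{Shuffle}}^2 \le \frac{\gamma L n}{4}\sigma_\ast^2$. -/
/-!
Put `g a = ∇f_a(x_*)`. Optimality of `x_*` gives `∑ a, g a = 0`, and
`x_*^i - x_* = -γ ∑_{j<i} g_{π_j}`, so strong convexity and smoothness squeeze
`D_{f_{π_i}}(x_*^i, x_*)` between `μ/2` and `L/2` times `γ² ‖∑_{j<i} g_{π_j}‖²`.
Under a uniform permutation every ordered pair `(π_j, π_k)` with `j ≠ k` is uniformly
distributed, which together with `∑ g = 0` gives the sampling-without-replacement identity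
`𝔼 ‖∑_{j<i} g_{π_j}‖² = i(n-i)/(n(n-1)) · n σ_*²`. The factor `i(n-i)/(n(n-1))` is at most
`1/2` for every `i` and at least `1/4` at `i = ⌊n/2⌋`.
-/

open Finset InnerProductSpace RealInnerProductSpace

section Bregman

variable {E : Type*} [NormedAddCommGroup E] [InnerProductSpace ℝ E] [CompleteSpace E]

noncomputable def bregman (h : E → ℝ) (x y : E) : ℝ :=
  h x - h y - ⟪gradient h y, x - y⟫_ℝ

lemma hasDerivAt_comp_add_smul {h : E → ℝ} (hd : Differentiable ℝ h) (y v : E) (t : ℝ) :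
    HasDerivAt (fun t : ℝ => h (y + t • v)) ⟪gradient h (y + t • v), v⟫_ℝ t := by
  have hline : HasDerivAt (fun t : ℝ => y + t • v) v t := by
    simpa using ((hasDerivAt_id t).smul_const v).const_add y
  simpa [toDual_apply_apply, Function.comp_def] using
    (hd _).hasGradientAt.hasFDerivAt.comp_hasDerivAt t hline

lemma le_bregman_of_strongly_convex {h : E → ℝ} {μ : ℝ}
    (hsc : ∀ x y, h x + ⟪gradient h x, y - x⟫_ℝ + μ / 2 * ‖y - x‖ ^ 2 ≤ h y) (x y : E) :
    μ / 2 * ‖x - y‖ ^ 2 ≤ bregman h x y := by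
  have := hsc y x
  unfold bregman
  linarith

lemma bregman_le_of_lipschitz_gradient {h : E → ℝ} (hd : Differentiable ℝ h) {L : ℝ}
    (hL : ∀ x y, ‖gradient h x - gradient h y‖ ≤ L * ‖x - y‖) (x y : E) :
    bregman h x y ≤ L / 2 * ‖x - y‖ ^ 2 := by
  set v := x - y
  let ψ : ℝ → ℝ := fun t => h (y + t • v) - t * ⟪gradient h y, v⟫_ℝ - L * ‖v‖ ^ 2 * t ^ 2 / 2
  have hψ (t : ℝ) :
      HasDerivAt ψ (⟪gradient h (y + t • v) - gradient h y, v⟫_ℝ - L * ‖v‖ ^ 2 * t) t := by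
    have hquad := ((hasDerivAt_pow 2 t).const_mul (L * ‖v‖ ^ 2)).div_const 2
    refine (((hasDerivAt_comp_add_smul hd y v t).sub
      ((hasDerivAt_id t).mul_const ⟪gradient h y, v⟫_ℝ)).sub hquad).congr_deriv ?_
    rw [inner_sub_left]
    simp only [inner_gradient_left, one_mul, Nat.cast_ofNat, Nat.add_one_sub_one, pow_one,
      sub_right_inj]
    ring
  have hψ_nonpos : ∀ t ∈ interior (Set.Icc (0 : ℝ) 1), deriv ψ t ≤ 0 := by
    intro t ht
    rw [interior_Icc] at ht
    have hdist : ‖y + t • v - y‖ = t * ‖v‖ := by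
      rw [add_sub_cancel_left, norm_smul, Real.norm_of_nonneg ht.1.le]
    have hcs := real_inner_le_norm (gradient h (y + t • v) - gradient h y) v
    have hlip := mul_le_mul_of_nonneg_right (hL (y + t • v) y) (norm_nonneg v)
    rw [hdist] at hlip
    rw [(hψ t).deriv]
    nlinarith
  have hanti := antitoneOn_of_deriv_nonpos (convex_Icc 0 1)
    (HasDerivAt.continuousOn fun t _ => hψ t)
    (fun t _ => (hψ t).differentiableAt.differentiableWithinAt) hψ_nonpos
    (Set.left_mem_Icc.2 zero_le_one) (Set.right_mem_Icc.2 zero_le_one) zero_le_one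
  simp only [ψ, v, one_smul, add_sub_cancel, zero_smul, add_zero] at hanti
  unfold bregman
  linarith

lemma sum_gradient_eq_zero_of_forall_sum_le {ι : Type*} [Fintype ι] {f : ι → E → ℝ} {x₀ : E}
    (hd : ∀ i, DifferentiableAt ℝ (f i) x₀) (hmin : ∀ x, ∑ i, f i x₀ ≤ ∑ i, f i x) :
    ∑ i, gradient (f i) x₀ = 0 := by
  have hderiv : HasFDerivAt (fun x => ∑ i, f i x) (toDual ℝ E (∑ i, gradient (f i) x₀)) x₀ := by
    rw [map_sum]
    exact HasFDerivAt.fun_sum fun i _ => (hd i).hasGradientAt.hasFDerivAt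
  have hmin' : IsLocalMin (fun x => ∑ i, f i x) x₀ := Filter.Eventually.of_forall hmin
  exact (toDual ℝ E).map_eq_zero_iff.mp (hmin'.hasFDerivAt_eq_zero hderiv)

end Bregman

noncomputable def withoutReplacementFactor (n i : ℕ) : ℝ :=
  i * (n - i) / (n * (n - 1))

lemma withoutReplacementFactor_pos {n i : ℕ} (hi : 0 < i) (hin : i < n) :
    0 < withoutReplacementFactor n i := by
  have hi' : (1 : ℝ) ≤ i := by exact_mod_cast hi
  have hin' : (i : ℝ) < n := by exact_mod_cast hin
  unfold withoutReplacementFactor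
  apply div_pos <;> nlinarith

lemma withoutReplacementFactor_le_half {n : ℕ} (hn : 2 ≤ n) (i : ℕ) :
    withoutReplacementFactor n i ≤ 1 / 2 := by
  have hn' : (2 : ℝ) ≤ n := by exact_mod_cast hn
  unfold withoutReplacementFactor
  rw [div_le_iff₀ (by nlinarith)]
  nlinarith [sq_nonneg (2 * (i : ℝ) - n)]

lemma quarter_le_withoutReplacementFactor_half {n : ℕ} (hn : 2 ≤ n) :
    1 / 4 ≤ withoutReplacementFactor n (n / 2) := by
  have hn' : (2 : ℝ) ≤ n := by exact_mod_cast hn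
  have hlo : 2 * ((n / 2 : ℕ) : ℝ) ≤ n := by exact_mod_cast Nat.mul_div_le n 2
  have hhi : (n : ℝ) ≤ 2 * ((n / 2 : ℕ) : ℝ) + 1 := by
    exact_mod_cast (by omega : n ≤ 2 * (n / 2) + 1)
  unfold withoutReplacementFactor
  rw [le_div_iff₀ (by nlinarith)]
  nlinarith

section PermSums

open Equiv

variable {α M : Type*} [Fintype α] [DecidableEq α] [AddCommMonoid M]

lemma sum_perm_apply_eq (φ : α → M) (a b : α) :
    ∑ π : Perm α, φ (π a) = ∑ π : Perm α, φ (π b) := by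
  obtain ⟨τ, hτ⟩ := MulAction.exists_smul_eq (Perm α) b a
  exact Fintype.sum_equiv (Equiv.mulRight τ) _ _ fun π => by simp [← hτ, Perm.smul_def]

lemma sum_perm_apply_apply_eq (φ : α → α → M) {a b c d : α} (hab : a ≠ b) (hcd : c ≠ d) :
    ∑ π : Perm α, φ (π a) (π b) = ∑ π : Perm α, φ (π c) (π d) := by
  obtain ⟨τ, hτc, hτd⟩ :=
    MulAction.is_two_pretransitive_iff.mp (Perm.isMultiplyPretransitive α 2) hcd hab
  exact Fintype.sum_equiv (Equiv.mulRight τ) _ _ fun π => by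
    simp [← hτc, ← hτd, Perm.smul_def]

lemma sum_perm_sum_sum_apply (φ : α → α → M) (J : Finset α) {a b : α} (hab : a ≠ b) :
    ∑ π : Perm α, ∑ j ∈ J, ∑ k ∈ J, φ (π j) (π k) =
      #J • ∑ π : Perm α, φ (π a) (π a) + (#J * (#J - 1)) • ∑ π : Perm α, φ (π a) (π b) := by
  have hrow : ∀ j ∈ J, ∑ k ∈ J, ∑ π : Perm α, φ (π j) (π k) =
      ∑ π : Perm α, φ (π a) (π a) + (#J - 1) • ∑ π : Perm α, φ (π a) (π b) := by
    intro j hj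
    rw [← add_sum_erase J _ hj, sum_perm_apply_eq (fun x => φ x x) j a,
      sum_congr rfl fun k hk => sum_perm_apply_apply_eq φ (ne_of_mem_erase hk).symm hab,
      sum_const, card_erase_of_mem hj]
  rw [sum_comm]
  simp_rw [sum_comm (s := univ)]
  rw [sum_congr rfl hrow, sum_const, smul_add, mul_smul]

variable {E : Type*} [NormedAddCommGroup E] [InnerProductSpace ℝ E]

lemma sum_perm_norm_sq_sum (g : α → E) (J : Finset α) {a b : α} (hab : a ≠ b) :
    ∑ π : Perm α, ‖∑ j ∈ J, g (π j)‖ ^ 2 =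
      #J * ∑ π : Perm α, ‖g (π a)‖ ^ 2 + #J * (#J - 1) * ∑ π : Perm α, ⟪g (π a), g (π b)⟫_ℝ := by
  have hpred : ((#J * (#J - 1) : ℕ) : ℝ) = #J * (#J - 1) := by
    rcases (#J).eq_zero_or_pos with h | h
    · simp [h]
    · rw [Nat.cast_mul, Nat.cast_pred h]
  simp_rw [← real_inner_self_eq_norm_sq, sum_inner, inner_sum]
  rw [sum_perm_sum_sum_apply (fun x y => ⟪g x, g y⟫_ℝ) J hab, nsmul_eq_mul, nsmul_eq_mul, hpred]

theorem inv_card_mul_sum_perm_norm_sq_sum [Nontrivial α] {g : α → E} (hg : ∑ a, g a = 0)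
    (J : Finset α) :
    (Fintype.card (Perm α) : ℝ)⁻¹ * ∑ π : Perm α, ‖∑ j ∈ J, g (π j)‖ ^ 2 =
      withoutReplacementFactor (Fintype.card α) #J * ∑ a, ‖g a‖ ^ 2 := by
  obtain ⟨a, b, hab⟩ := exists_pair_ne α
  have htotal := sum_perm_norm_sq_sum g univ hab
  set n : ℝ := (Fintype.card α : ℝ)
  set N : ℝ := (Fintype.card (Perm α) : ℝ)
  set W := ∑ a, ‖g a‖ ^ 2
  have hn : 1 < n := Nat.one_lt_cast.mpr Fintype.one_lt_card
  have hN : 0 < N := Nat.cast_pos.mpr Fintype.card_pos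
  have hdiag : n * ∑ π : Perm α, ‖g (π a)‖ ^ 2 = N * W := by
    calc n * ∑ π : Perm α, ‖g (π a)‖ ^ 2 = ∑ c : α, ∑ π : Perm α, ‖g (π c)‖ ^ 2 := by
          simp [sum_perm_apply_eq (fun x => ‖g x‖ ^ 2) _ a, n]
      _ = N * W := by
          rw [sum_comm, sum_congr rfl fun π _ => Equiv.sum_comp π (fun x => ‖g x‖ ^ 2),
            sum_const, card_univ, nsmul_eq_mul]
  simp only [Equiv.sum_comp, hg, norm_zero, ne_eq, OfNat.ofNat_ne_zero, not_false_eq_true,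
    zero_pow, sum_const_zero, card_univ] at htotal
  rw [withoutReplacementFactor, div_mul_eq_mul_div, eq_div_iff (by nlinarith),
    sum_perm_norm_sq_sum g J hab]
  field_simp
  linear_combination (#J * (n - #J)) * hdiag - (#J * (#J - 1)) * htotal

end PermSums

section Shuffling

open Equiv

variable {α E : Type*} [Fintype α] [DecidableEq α] [Nontrivial α]
  [NormedAddCommGroup E] [InnerProductSpace ℝ E] [CompleteSpace E]

theorem shuffled_bregman_bounds {f : α → E → ℝ} {μ L γ : ℝ} (hγ : 0 < γ)
    (hd : ∀ a, Differentiable ℝ (f a))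
    (hsc : ∀ a x y, f a x + ⟪gradient (f a) x, y - x⟫_ℝ + μ / 2 * ‖y - x‖ ^ 2 ≤ f a y)
    (hsm : ∀ a x y, ‖gradient (f a) x - gradient (f a) y‖ ≤ L * ‖x - y‖)
    {x₀ : E} (hg : ∑ a, gradient (f a) x₀ = 0) (J : Finset α) (i : α) (x : Perm α → E)
    (hx : ∀ π, x π = x₀ - γ • ∑ j ∈ J, gradient (f (π j)) x₀) :
    μ * γ / 2 * (withoutReplacementFactor (Fintype.card α) #J *
        ∑ a, ‖gradient (f a) x₀‖ ^ 2) ≤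
      γ⁻¹ * ((Fintype.card (Perm α) : ℝ)⁻¹ * ∑ π : Perm α, bregman (f (π i)) (x π) x₀) ∧
    γ⁻¹ * ((Fintype.card (Perm α) : ℝ)⁻¹ * ∑ π : Perm α, bregman (f (π i)) (x π) x₀) ≤
      L * γ / 2 * (withoutReplacementFactor (Fintype.card α) #J *
        ∑ a, ‖gradient (f a) x₀‖ ^ 2) := by
  have hmean (K : ℝ) :
      γ⁻¹ * ((Fintype.card (Perm α) : ℝ)⁻¹ * ∑ π : Perm α, K / 2 * ‖x π - x₀‖ ^ 2) =
        K * γ / 2 * (withoutReplacementFactor (Fintype.card α) #J *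
          ∑ a, ‖gradient (f a) x₀‖ ^ 2) := by
    simp_rw [hx, sub_sub_cancel_left, norm_neg, norm_smul, Real.norm_of_nonneg hγ.le, mul_pow]
    rw [← inv_card_mul_sum_perm_norm_sq_sum hg J, ← mul_sum, ← mul_sum]
    field_simp
  rw [← hmean μ, ← hmean L]
  refine ⟨?_, ?_⟩ <;> gcongr with π
  · exact le_bregman_of_strongly_convex (hsc (π i)) (x π) x₀
  · exact bregman_le_of_lipschitz_gradient (hd (π i)) (hsm (π i)) (x π) x₀

end Shuffling

/-- Proposition 1: the shuffling variance `σ²_Shuffle` is bounded between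
`γμn/8 · σ²_*` and `γLn/4 · σ²_*`. -/
theorem shuffling_variance_bounds
    (d n : ℕ) (hn : 2 ≤ n) (μ L γ : ℝ) (hμ : 0 < μ) (hγ : 0 < γ)
    (f : Fin n → EuclideanSpace ℝ (Fin d) → ℝ)
    (hd : ∀ i, Differentiable ℝ (f i))
    (hsc : ∀ i x y, f i x + (inner ℝ (gradient (f i) x) (y - x) : ℝ)
        + μ / 2 * ‖y - x‖ ^ 2 ≤ f i y)
    (hsm : ∀ i x y, ‖gradient (f i) x - gradient (f i) y‖ ≤ L * ‖x - y‖)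
    (xstar : EuclideanSpace ℝ (Fin d))
    (hmin : ∀ x, (n : ℝ)⁻¹ * ∑ i, f i xstar ≤ (n : ℝ)⁻¹ * ∑ i, f i x)
    (σstar2 : ℝ) (hσ : σstar2 = (n : ℝ)⁻¹ * ∑ i, ‖gradient (f i) xstar‖ ^ 2)
    (xs : Equiv.Perm (Fin n) → Fin n → EuclideanSpace ℝ (Fin d))
    (hxs : ∀ π i, xs π i = xstar - γ •
        ∑ j ∈ Finset.univ.filter (fun j : Fin n => (j : ℕ) < (i : ℕ)),
          gradient (f (π j)) xstar)
    (S : ℝ)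
    (hS : S = (Finset.univ.filter (fun i : Fin n => 1 ≤ (i : ℕ))).sup'
        ⟨⟨1, by omega⟩, Finset.mem_filter.mpr ⟨Finset.mem_univ _, le_refl 1⟩⟩
        (fun i => γ⁻¹ * ((Fintype.card (Equiv.Perm (Fin n)) : ℝ)⁻¹ *
          ∑ π : Equiv.Perm (Fin n),
            (f (π i) (xs π i) - f (π i) xstar
              - (inner ℝ (gradient (f (π i)) xstar) (xs π i - xstar) : ℝ))))) :
    γ * μ * n / 8 * σstar2 ≤ S ∧ S ≤ γ * L * n / 4 * σstar2 := by
  have : Nontrivial (Fin n) := Fin.nontrivial_iff_two_le.mpr hn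
  have hg : ∑ i, gradient (f i) xstar = 0 :=
    sum_gradient_eq_zero_of_forall_sum_le (fun i => hd i xstar)
      fun x => le_of_mul_le_mul_left (hmin x) (by positivity)
  have hW : ∑ i, ‖gradient (f i) xstar‖ ^ 2 = n * σstar2 := by
    rw [hσ]; field_simp
  have hσ0 : 0 ≤ σstar2 := by rw [hσ]; positivity
  have hcard (i : Fin n) : #{j : Fin n | (j : ℕ) < i} = (i : ℕ) := by
    rw [Fin.card_filter_val_lt, min_eq_right i.is_lt.le]
  have hbound (i : Fin n) := shuffled_bregman_bounds hγ hd hsc hsm hg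
    (univ.filter fun j : Fin n => (j : ℕ) < i) i (fun π => xs π i) (fun π => hxs π i)
  simp only [hcard, hW, Fintype.card_fin] at hbound
  subst hS
  constructor
  · refine le_sup'_of_le _ (b := ⟨n / 2, by omega⟩)
      (mem_filter.mpr ⟨mem_univ _, show 1 ≤ n / 2 by omega⟩) ((hbound _).1.trans' ?_)
    calc γ * μ * n / 8 * σstar2 = μ * γ / 2 * (1 / 4 * (n * σstar2)) := by ring
      _ ≤ _ := by gcongr; exact quarter_le_withoutReplacementFactor_half hn
  · refine sup'_le _ _ fun i hi => (hbound i).2.trans ?_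
    have hc := withoutReplacementFactor_pos (mem_filter.mp hi).2 i.is_lt
    -- the two bounds of `hbound i` force `μ σ² ≤ L σ²`
    have hLσ : 0 ≤ L * σstar2 := by
      have hμL := (hbound i).1.trans (hbound i).2
      have ht : 0 < γ / 2 * (withoutReplacementFactor n i * n) := by positivity
      exact (mul_nonneg hμ.le hσ0).trans (le_of_mul_le_mul_right (by linarith) ht)
    calc L * γ / 2 * (withoutReplacementFactor n i * (n * σstar2))
        = γ / 2 * n * (L * σstar2) * withoutReplacementFactor n i := by ring
      _ ≤ γ / 2 * n * (L * σstar2) * (1 / 2) := by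
          gcongr; exact withoutReplacementFactor_le_half hn i
      _ = γ * L * n / 4 * σstar2 := by ring
end

section
/- For a uniformly random permutation $\pi$ of $\{1,\dots,n\}$ ($n \ge 2$), vectors $g_1,\dots,g_n \in \mathbb{R}^d$ with $\sum_{i=1}^n g_i = 0$, and variance $\sigma^2 = \frac{1}{n}\sum_{i=1}^n \|g_i\|^2$, it holds for each $0 \le k \le n$ that $\mathbb{E}\big[\big\|\sum_{i=k}^{n-1} g_{\pi_i}\big\|^2\big] = \frac{k(n-k)}{n-1}\sigma^2$, and consequently $\sum_{k=0}^{n-1}\mathbb{E}\big[\big\|\sum_{i=k}^{n-1} g_{\pi_i}\big\|^2\big] = \frac{n(n+1)}{6}\sigma^2 \le \frac{n^2\sigma^2}{4}$. -/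
/-!
Let `c i j = ∑_π ⟪g (π i), g (π j)⟫` (`permInner`). Relabelling the permutation shows `c (σ i) (σ j) = c i j`,
so every diagonal entry is `N S / n` (with `N = n!` and `S = ∑ ‖g a‖²`) and, within a row, all
off-diagonal entries agree. Since `∑ g = 0` each row of `c` sums to zero, which pins the
off-diagonal entries to `-(N S / n) / (n - 1)`. Summing `c` over `T × T` with `#T = t` gives the
expectation `t (n - t) / (n - 1) · S / n`; the sum over `k` is then `∑ k (n - k) = (n - 1) n (n + 1) / 6`.
-/

open Finset Equiv RealInnerProductSpace

section PermInner

variable {α E : Type*} [Fintype α] [DecidableEq α] [NormedAddCommGroup E] [InnerProductSpace ℝ E]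

theorem card_smul_sum_perm_apply {M : Type*} [AddCommMonoid M] (F : α → M) (i : α) :
    Fintype.card α • ∑ π : Perm α, F (π i) = Fintype.card (Perm α) • ∑ a, F a := by
  have hindep : ∀ j, ∑ π : Perm α, F (π j) = ∑ π : Perm α, F (π i) := fun j =>
    Fintype.sum_equiv (Equiv.mulRight (swap i j)) _ _ fun π => by simp
  calc Fintype.card α • ∑ π : Perm α, F (π i) = ∑ j, ∑ π : Perm α, F (π j) := by
        simp [hindep]
    _ = ∑ π : Perm α, ∑ j, F (π j) := sum_comm
    _ = ∑ _π : Perm α, ∑ a, F a := sum_congr rfl fun π _ => Equiv.sum_comp π F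
    _ = Fintype.card (Perm α) • ∑ a, F a := by simp

variable (g : α → E)

def permInner (i j : α) : ℝ := ∑ π : Perm α, ⟪g (π i), g (π j)⟫

theorem permInner_apply_perm (σ : Perm α) (i j : α) :
    permInner g (σ i) (σ j) = permInner g i j :=
  Fintype.sum_equiv (Equiv.mulRight σ) _ _ fun _ => rfl

theorem permInner_eq_of_ne {i j k : α} (hij : i ≠ j) (hik : i ≠ k) :
    permInner g i j = permInner g i k := by
  simpa [swap_apply_of_ne_of_ne hij hik] using (permInner_apply_perm g (swap j k) i j).symm

theorem card_mul_permInner_self (i : α) :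
    (Fintype.card α : ℝ) * permInner g i i = Fintype.card (Perm α) * ∑ a, ‖g a‖ ^ 2 := by
  simpa only [permInner, real_inner_self_eq_norm_sq, nsmul_eq_mul]
    using card_smul_sum_perm_apply (fun a => ‖g a‖ ^ 2) i

theorem sum_permInner_eq_zero (hg : ∑ a, g a = 0) (i : α) : ∑ j, permInner g i j = 0 := by
  calc ∑ j, permInner g i j = ∑ π : Perm α, ⟪g (π i), ∑ j, g (π j)⟫ := by
        simp only [permInner, inner_sum]
        exact sum_comm
    _ = 0 := sum_eq_zero fun π _ => by rw [Equiv.sum_comp π g, hg, inner_zero_right]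

theorem card_sub_one_mul_permInner (hg : ∑ a, g a = 0) {i j : α} (hij : i ≠ j) :
    ((Fintype.card α : ℝ) - 1) * permInner g i j = -permInner g i i := by
  have hrow := sum_permInner_eq_zero g hg i
  rw [← add_sum_erase _ _ (mem_univ i),
    sum_congr rfl fun k hk => permInner_eq_of_ne g (ne_of_mem_erase hk).symm hij, sum_const,
    card_erase_of_mem (mem_univ i), card_univ, nsmul_eq_mul,
    Nat.cast_sub (Fintype.card_pos_iff.2 ⟨i⟩)] at hrow
  push_cast at hrow
  linarith

theorem sum_perm_norm_sq_sum_s11 (T : Finset α) :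
    ∑ π : Perm α, ‖∑ i ∈ T, g (π i)‖ ^ 2 = ∑ i ∈ T, ∑ j ∈ T, permInner g i j := by
  simp_rw [permInner, ← real_inner_self_eq_norm_sq, sum_inner, inner_sum]
  rw [sum_comm]
  exact sum_congr rfl fun _ _ => sum_comm

theorem inv_card_perm_mul_sum_norm_sq_sum (hα : 1 < Fintype.card α) (hg : ∑ a, g a = 0)
    (T : Finset α) :
    (Fintype.card (Perm α) : ℝ)⁻¹ * ∑ π : Perm α, ‖∑ i ∈ T, g (π i)‖ ^ 2 =
      #T * (Fintype.card α - #T) / (Fintype.card α - 1) *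
        ((Fintype.card α : ℝ)⁻¹ * ∑ a, ‖g a‖ ^ 2) := by
  set n : ℝ := (Fintype.card α : ℝ)
  set N : ℝ := (Fintype.card (Perm α) : ℝ)
  set S := ∑ a, ‖g a‖ ^ 2
  have hn : n ≠ 0 := by positivity
  have hn1 : n - 1 ≠ 0 := sub_ne_zero.2 (Nat.one_lt_cast.2 hα).ne'
  have hN : N ≠ 0 := by positivity
  have hdiag : ∀ i, permInner g i i = N * S / n := fun i => by
    rw [eq_div_iff hn, mul_comm, card_mul_permInner_self]
  have hoff : ∀ i j, i ≠ j → permInner g i j = -(N * S / n) / (n - 1) := fun i j hij => by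
    rw [eq_div_iff hn1, mul_comm, card_sub_one_mul_permInner g hg hij, hdiag]
  have hentry : ∀ i j, permInner g i j =
      -(N * S / n) / (n - 1) + if i = j then N * S / n + (N * S / n) / (n - 1) else 0 := by
    intro i j
    split_ifs with h
    · rw [h, hdiag]; ring
    · rw [hoff i j h, add_zero]
  rw [sum_perm_norm_sq_sum_s11]
  simp only [hentry, sum_add_distrib, sum_const, nsmul_eq_mul, sum_ite_eq]
  rw [sum_ite_mem, inter_self, sum_const, nsmul_eq_mul]
  field_simp
  ring

end PermInner

theorem Fin.card_filter_le_val {n k : ℕ} (hk : k ≤ n) : #{i : Fin n | k ≤ (i : ℕ)} = n - k := by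
  have hlt := Fin.card_filter_val_lt (n := n) (m := k)
  have hsplit := card_filter_add_card_filter_not (s := (univ : Finset (Fin n)))
    (fun i : Fin n => (i : ℕ) < k)
  simp only [not_lt, card_univ, Fintype.card_fin] at hsplit
  omega

theorem Finset.sum_range_id_real (n : ℕ) : ∑ k ∈ range n, (k : ℝ) = n * (n - 1) / 2 := by
  rcases n with _ | n
  · simp
  · have h : ((∑ k ∈ range (n + 1), k : ℕ) : ℝ) * 2 = (n + 1) * n := by
      exact_mod_cast sum_range_id_mul_two (n + 1)
    push_cast at h ⊢
    linarith

theorem Finset.sum_range_mul_sub_real (n : ℕ) :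
    ∑ k ∈ range n, (k : ℝ) * (n - k) = (n - 1) * n * (n + 1) / 6 := by
  induction n with
  | zero => simp
  | succ n ih =>
    have hstep : ∑ k ∈ range (n + 1), (k : ℝ) * ((n + 1 : ℕ) - k) =
        ∑ k ∈ range n, (k : ℝ) * (n - k) + ∑ k ∈ range (n + 1), (k : ℝ) := by
      rw [sum_range_succ, sum_range_succ _ n, ← add_assoc, ← sum_add_distrib]
      push_cast
      congr 1
      · exact sum_congr rfl fun _ _ => by ring
      · ring
    rw [hstep, ih, sum_range_id_real]
    push_cast
    ring

/-- For vectors summing to zero and a uniformly random permutation,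
`E‖∑_{i=k}^{n-1} g_{π_i}‖² = k(n-k)/(n-1) σ²`, and the sum over `k`
equals `n(n+1)/6 σ² ≤ n²σ²/4`. -/
theorem tail_sum_variance_without_replacement
    (d n : ℕ) (hn : 2 ≤ n) (g : Fin n → EuclideanSpace ℝ (Fin d))
    (hg : ∑ i, g i = 0)
    (σ2 : ℝ) (hσ : σ2 = (n : ℝ)⁻¹ * ∑ i, ‖g i‖ ^ 2)
    (E : ℕ → ℝ)
    (hE : ∀ k, E k = (Fintype.card (Equiv.Perm (Fin n)) : ℝ)⁻¹ *
      ∑ π : Equiv.Perm (Fin n),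
        ‖∑ i ∈ Finset.univ.filter (fun i : Fin n => k ≤ (i : ℕ)), g (π i)‖ ^ 2) :
    (∀ k ≤ n, E k = ((k : ℝ) * ((n : ℝ) - k)) / ((n : ℝ) - 1) * σ2) ∧
    (∑ k ∈ Finset.range n, E k = (n : ℝ) * ((n : ℝ) + 1) / 6 * σ2) ∧
    (n : ℝ) * ((n : ℝ) + 1) / 6 * σ2 ≤ (n : ℝ) ^ 2 * σ2 / 4 := by
  have hnR : (2 : ℝ) ≤ n := by exact_mod_cast hn
  have hσ0 : 0 ≤ σ2 := hσ ▸ by positivity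
  have hEk : ∀ k ≤ n, E k = ((k : ℝ) * ((n : ℝ) - k)) / ((n : ℝ) - 1) * σ2 := by
    intro k hk
    rw [hE, inv_card_perm_mul_sum_norm_sq_sum g (by rw [Fintype.card_fin]; omega) hg,
      Fin.card_filter_le_val hk, Fintype.card_fin, ← hσ, Nat.cast_sub hk]
    ring
  refine ⟨hEk, ?_, ?_⟩
  · rw [sum_congr rfl fun k hk => hEk k (mem_range.1 hk).le, ← sum_mul, ← sum_div,
      sum_range_mul_sub_real]
    field_simp [show (n : ℝ) - 1 ≠ 0 by linarith]
  · have hcoeff : (n : ℝ) * (n + 1) / 6 ≤ n ^ 2 / 4 := by nlinarith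
    calc (n : ℝ) * (n + 1) / 6 * σ2 ≤ n ^ 2 / 4 * σ2 := mul_le_mul_of_nonneg_right hcoeff hσ0
      _ = n ^ 2 * σ2 / 4 := by ring
end

section
/- Let $f_1,\dots,f_n : \mathbb{R}^d \to \mathbb{R}$ be convex and $L$-smooth with $x_\ast$ a minimizer of $f = \frac{1}{n}\sum_i f_i$. Fix a permutation $\pi$, stepsize $\gamma > 0$, and iterates $x^0 = x$, $x^{i+1} = x^i - \gamma\nabla f_{\pi_i}(x^i)$, $x^+ = x^n$. Then for each $0 \le k \le n-1$: $\|x^k - x^+\|^2 \le 4\gamma^2 L n \sum_{i=0}^{n-1} D_{f_{\pi_i}}(x_\ast, x^i) + 2\gamma^2\big\|\sum_{i=k}^{n-1}\nabla f_{\pi_i}(x_\ast)\big\|^2$. -/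
/-!
Telescoping the iteration gives `x^k - x^n = γ • ∑_{i ≥ k} ∇f_{π i}(x^i)`. Split each gradient as
`(∇f_{π i}(x^i) - ∇f_{π i}(x_*)) + ∇f_{π i}(x_*)` and use `‖a + b‖² ≤ 2‖a‖² + 2‖b‖²`. The first sum
is at most `n` times the sum of its squared norms, and each of those is bounded by cocoercivity,
`‖∇h x - ∇h y‖² ≤ 2L D_h(x, y)`. Cocoercivity comes from the descent lemma applied to the tilted
function `h - ⟪∇h y, ·⟫`, which is convex with gradient zero at `y` and hence minimal there.
-/

open Finset AffineMap InnerProductSpace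
open scoped RealInnerProductSpace

noncomputable def bregmanDiv {E : Type*} [NormedAddCommGroup E] [InnerProductSpace ℝ E]
    [CompleteSpace E] (h : E → ℝ) (x y : E) : ℝ :=
  h x - h y - ⟪gradient h y, x - y⟫

section Smooth

variable {E : Type*} [NormedAddCommGroup E] [InnerProductSpace ℝ E] [CompleteSpace E]
  {h : E → ℝ}

theorem HasGradientAt.hasDerivAt_comp_lineMap {g a b : E} {t : ℝ}
    (hh : HasGradientAt h g (lineMap a b t)) :
    HasDerivAt (fun s : ℝ => h (lineMap a b s)) ⟪g, b - a⟫ t := by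
  simpa [toDual_apply_apply, Function.comp_def] using
    hh.hasFDerivAt.comp_hasDerivAt t hasDerivAt_lineMap

theorem ConvexOn.bregmanDiv_nonneg (hc : ConvexOn ℝ Set.univ h) {y : E}
    (hd : DifferentiableAt ℝ h y) (x : E) : 0 ≤ bregmanDiv h x y := by
  have hline := hc.comp_affineMap (lineMap y x)
  have hder := HasGradientAt.hasDerivAt_comp_lineMap (b := x) (t := 0)
    (by simpa using hd.hasGradientAt)
  have := hline.le_slope_of_hasDerivAt trivial trivial zero_lt_one hder
  simp only [slope_def_field, Function.comp_apply, lineMap_apply_one, lineMap_apply_zero,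
    sub_zero, div_one] at this
  unfold bregmanDiv
  linarith

theorem bregmanDiv_le_of_lipschitz_gradient (hd : Differentiable ℝ h) {L : ℝ}
    (hsm : ∀ a b, ‖gradient h a - gradient h b‖ ≤ L * ‖a - b‖) (z x : E) :
    bregmanDiv h z x ≤ L / 2 * ‖z - x‖ ^ 2 := by
  set ψ : ℝ → ℝ := fun t =>
    h (lineMap x z t) - t * ⟪gradient h x, z - x⟫ - L * ‖z - x‖ ^ 2 * t ^ 2 / 2
  have hψ : ∀ t, HasDerivAt ψ
      (⟪gradient h (lineMap x z t), z - x⟫ - ⟪gradient h x, z - x⟫ - L * ‖z - x‖ ^ 2 * t) t :=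
    fun t => (((hd _).hasGradientAt.hasDerivAt_comp_lineMap.sub
      ((hasDerivAt_id t).mul_const _)).sub
      (((hasDerivAt_pow 2 t).const_mul (L * ‖z - x‖ ^ 2)).div_const 2)).congr_deriv
        (by norm_num only [one_mul]; ring)
  have hanti : AntitoneOn ψ (Set.Ici 0) := by
    refine antitoneOn_of_deriv_nonpos (convex_Ici 0)
      (fun t _ => (hψ t).continuousAt.continuousWithinAt)
      (fun t _ => (hψ t).differentiableAt.differentiableWithinAt) fun t ht => ?_
    rw [interior_Ici] at ht
    have hdist : ‖lineMap x z t - x‖ = t * ‖z - x‖ := by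
      rw [← vsub_eq_sub, lineMap_vsub_left, vsub_eq_sub, norm_smul, Real.norm_of_nonneg ht.le]
    calc deriv ψ t
        = ⟪gradient h (lineMap x z t) - gradient h x, z - x⟫ - L * ‖z - x‖ ^ 2 * t := by
          rw [(hψ t).deriv, inner_sub_left]
      _ ≤ ‖gradient h (lineMap x z t) - gradient h x‖ * ‖z - x‖ - L * ‖z - x‖ ^ 2 * t := by
          gcongr; exact real_inner_le_norm _ _
      _ ≤ L * (t * ‖z - x‖) * ‖z - x‖ - L * ‖z - x‖ ^ 2 * t := by
          gcongr; exact hdist ▸ hsm _ _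
      _ = 0 := by ring
  have := hanti Set.self_mem_Ici (Set.mem_Ici.2 zero_le_one) zero_le_one
  simp only [ψ, lineMap_apply_one, lineMap_apply_zero] at this
  unfold bregmanDiv
  linarith

theorem sq_norm_gradient_le_of_forall_le (hd : Differentiable ℝ h) {L : ℝ} (hL : 0 < L)
    (hsm : ∀ a b, ‖gradient h a - gradient h b‖ ≤ L * ‖a - b‖) {y : E}
    (hmin : ∀ z, h y ≤ h z) (x : E) : ‖gradient h x‖ ^ 2 ≤ 2 * L * (h x - h y) := by
  set g := gradient h x
  have hstep := bregmanDiv_le_of_lipschitz_gradient hd hsm (x - L⁻¹ • g) x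
  have hinner : ⟪g, x - L⁻¹ • g - x⟫ = -(L⁻¹ * ‖g‖ ^ 2) := by
    rw [sub_sub_cancel_left, inner_neg_right, real_inner_smul_right, real_inner_self_eq_norm_sq]
  have hnorm : ‖x - L⁻¹ • g - x‖ ^ 2 = L⁻¹ ^ 2 * ‖g‖ ^ 2 := by
    rw [sub_sub_cancel_left, norm_neg, norm_smul, mul_pow, Real.norm_eq_abs, sq_abs]
  rw [bregmanDiv, hinner, hnorm] at hstep
  have hdecrease : h y ≤ h x - ‖g‖ ^ 2 / (2 * L) := by
    have e1 : L / 2 * (L⁻¹ ^ 2 * ‖g‖ ^ 2) = ‖g‖ ^ 2 / (2 * L) := by field_simp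
    have e2 : L⁻¹ * ‖g‖ ^ 2 = 2 * (‖g‖ ^ 2 / (2 * L)) := by field_simp
    linarith [hmin (x - L⁻¹ • g)]
  exact (div_le_iff₀' (by positivity)).1 (by linarith)

theorem ConvexOn.sq_norm_gradient_sub_le_bregmanDiv (hc : ConvexOn ℝ Set.univ h)
    (hd : Differentiable ℝ h) {L : ℝ} (hL : 0 < L)
    (hsm : ∀ a b, ‖gradient h a - gradient h b‖ ≤ L * ‖a - b‖) (x y : E) :
    ‖gradient h x - gradient h y‖ ^ 2 ≤ 2 * L * bregmanDiv h x y := by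
  set c := gradient h y
  set φ : E → ℝ := fun z => h z - toDual ℝ E c z
  have hφ : ∀ z, HasGradientAt φ (gradient h z - c) z := fun z => by
    rw [hasGradientAt_iff_hasFDerivAt, map_sub]
    exact (hd z).hasGradientAt.hasFDerivAt.sub (toDual ℝ E c).hasFDerivAt
  have hgrad : gradient φ = fun z => gradient h z - c := funext fun z => (hφ z).gradient
  have hφd : Differentiable ℝ φ := fun z => (hφ z).differentiableAt
  have hφc : ConvexOn ℝ Set.univ φ := hc.sub ((toDual ℝ E c).toLinearMap.concaveOn convex_univ)
  have hφsm : ∀ a b, ‖gradient φ a - gradient φ b‖ ≤ L * ‖a - b‖ := by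
    simpa [hgrad] using hsm
  have hmin : ∀ z, φ y ≤ φ z := fun z => by
    have := hφc.bregmanDiv_nonneg (hφd y) z
    rw [bregmanDiv, hgrad] at this
    simpa [c] using this
  have := sq_norm_gradient_le_of_forall_le hφd hL hφsm hmin x
  rw [hgrad] at this
  convert this using 2
  simp only [bregmanDiv, φ, toDual_apply_apply, inner_sub_right]
  ring

end Smooth

theorem sub_last_eq_smul_sum_of_succ_eq_sub_smul {R M : Type*} [Ring R] [AddCommGroup M]
    [Module R M] {n : ℕ} {x : Fin (n + 1) → M} {g : Fin n → M} {c : R}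
    (hx : ∀ i : Fin n, x i.succ = x i.castSucc - c • g i) (j : Fin (n + 1)) :
    x j - x (Fin.last n) = c • ∑ i ∈ univ.filter (fun i : Fin n => (j : ℕ) ≤ i), g i := by
  induction j using Fin.reverseInduction with
  | last =>
    rw [sub_self, filter_false_of_mem fun i _ => not_le.2 i.is_lt, sum_empty, smul_zero]
  | cast i ih =>
    have hset : univ.filter (fun l : Fin n => (i.castSucc : ℕ) ≤ l)
        = insert i (univ.filter (fun l : Fin n => (i.succ : ℕ) ≤ l)) := by
      ext l
      simp only [mem_filter, mem_univ, true_and, mem_insert, Fin.val_succ, Fin.val_castSucc,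
        Fin.ext_iff]
      omega
    rw [hset, sum_insert (by simp), smul_add, ← ih, hx]
    abel

theorem norm_sum_sq_le_card_mul_sum_sq {ι E : Type*} [SeminormedAddCommGroup E] (s : Finset ι)
    (v : ι → E) : ‖∑ i ∈ s, v i‖ ^ 2 ≤ #s * ∑ i ∈ s, ‖v i‖ ^ 2 :=
  (pow_le_pow_left₀ (norm_nonneg _) (norm_sum_le s v) 2).trans (sq_sum_le_card_mul_sum_sq ..)

theorem norm_add_sq_le {E : Type*} [SeminormedAddCommGroup E] (a b : E) :
    ‖a + b‖ ^ 2 ≤ 2 * (‖a‖ ^ 2 + ‖b‖ ^ 2) :=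
  (pow_le_pow_left₀ (norm_nonneg _) (norm_add_le a b) 2).trans add_sq_le

theorem forward_deviation_bound_convex_general
    (d n : ℕ) (L γ : ℝ) (hL : 0 < L)
    (f : Fin n → EuclideanSpace ℝ (Fin d) → ℝ)
    (hd : ∀ i, Differentiable ℝ (f i))
    (hcvx : ∀ i, ConvexOn ℝ Set.univ (f i))
    (hsm : ∀ i x y, ‖gradient (f i) x - gradient (f i) y‖ ≤ L * ‖x - y‖)
    (xstar : EuclideanSpace ℝ (Fin d))
    (π : Equiv.Perm (Fin n))
    (x : Fin (n + 1) → EuclideanSpace ℝ (Fin d))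
    (hx : ∀ i : Fin n, x i.succ = x i.castSucc - γ • gradient (f (π i)) (x i.castSucc))
    (k : Fin n) :
    ‖x k.castSucc - x (Fin.last n)‖ ^ 2
      ≤ 4 * γ ^ 2 * L * n *
          ∑ i : Fin n, (f (π i) xstar - f (π i) (x i.castSucc)
            - (inner ℝ (gradient (f (π i)) (x i.castSucc)) (xstar - x i.castSucc) : ℝ))
        + 2 * γ ^ 2 *
          ‖∑ i ∈ Finset.univ.filter (fun i : Fin n => (k : ℕ) ≤ (i : ℕ)),
              gradient (f (π i)) xstar‖ ^ 2 := by
  set S := univ.filter (fun i : Fin n => (k : ℕ) ≤ (i : ℕ))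
  set g := fun i => gradient (f (π i)) (x i.castSucc)
  set gs := fun i => gradient (f (π i)) xstar
  set D := ∑ i, bregmanDiv (f (π i)) xstar (x i.castSucc)
  have hnoise : ‖∑ i ∈ S, (g i - gs i)‖ ^ 2 ≤ n * (2 * L * D) :=
    calc ‖∑ i ∈ S, (g i - gs i)‖ ^ 2 ≤ #S * ∑ i ∈ S, ‖g i - gs i‖ ^ 2 :=
          norm_sum_sq_le_card_mul_sum_sq _ _
      _ ≤ n * ∑ i, ‖g i - gs i‖ ^ 2 := by
          refine mul_le_mul (by simpa using card_le_univ S)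
            (sum_le_sum_of_subset_of_nonneg (subset_univ S) fun i _ _ => by positivity)
            (by positivity) (by positivity)
      _ ≤ n * (2 * L * D) := by
          gcongr
          simp only [D, mul_sum]
          gcongr with i
          rw [norm_sub_rev]
          exact (hcvx _).sq_norm_gradient_sub_le_bregmanDiv (hd _) hL (hsm _) _ _
  calc ‖x k.castSucc - x (Fin.last n)‖ ^ 2
      = γ ^ 2 * ‖∑ i ∈ S, (g i - gs i) + ∑ i ∈ S, gs i‖ ^ 2 := by
        rw [sub_last_eq_smul_sum_of_succ_eq_sub_smul hx, ← sum_add_distrib, norm_smul, mul_pow,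
          Real.norm_eq_abs, sq_abs]
        simp only [sub_add_cancel, g]
        rfl
    _ ≤ γ ^ 2 * (2 * (n * (2 * L * D) + ‖∑ i ∈ S, gs i‖ ^ 2)) := by
        gcongr
        exact (norm_add_sq_le _ _).trans (by gcongr)
    _ = _ := by simp only [D, bregmanDiv]; ring

/-- Forward per-epoch deviation bound for RR/SO with convex components (Lemma 2 core
inequality, deterministic per-permutation form). -/
theorem forward_deviation_bound_convex
    (d n : ℕ) (L γ : ℝ) (hL : 0 < L) (hγ : 0 < γ)
    (f : Fin n → EuclideanSpace ℝ (Fin d) → ℝ)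
    (hd : ∀ i, Differentiable ℝ (f i))
    (hcvx : ∀ i, ConvexOn ℝ Set.univ (f i))
    (hsm : ∀ i x y, ‖gradient (f i) x - gradient (f i) y‖ ≤ L * ‖x - y‖)
    (xstar : EuclideanSpace ℝ (Fin d))
    (hmin : ∀ y, (n : ℝ)⁻¹ * ∑ i, f i xstar ≤ (n : ℝ)⁻¹ * ∑ i, f i y)
    (π : Equiv.Perm (Fin n))
    (x : Fin (n + 1) → EuclideanSpace ℝ (Fin d))
    (hx : ∀ i : Fin n, x i.succ = x i.castSucc - γ • gradient (f (π i)) (x i.castSucc))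
    (k : Fin n) :
    ‖x k.castSucc - x (Fin.last n)‖ ^ 2
      ≤ 4 * γ ^ 2 * L * n *
          ∑ i : Fin n, (f (π i) xstar - f (π i) (x i.castSucc)
            - (inner ℝ (gradient (f (π i)) (x i.castSucc)) (xstar - x i.castSucc) : ℝ))
        + 2 * γ ^ 2 *
          ‖∑ i ∈ Finset.univ.filter (fun i : Fin n => (k : ℕ) ≤ (i : ℕ)),
              gradient (f (π i)) xstar‖ ^ 2 :=
  forward_deviation_bound_convex_general d n L γ hL f hd hcvx hsm xstar π x hx k
end

section
/- Let $f_1,\dots,f_n$ be $L$-smooth and define the incremental gradient epoch $x^0 = x$, $x^{i+1} = x^i - \gamma\nabla f_{i+1}(x^i)$ with $0 < \gamma \le \frac{1}{2Ln}$. Then $\sum_{i=1}^n \|x^i - x\|^2 \le 4\gamma^2 n^3\|\nabla f(x)\|^2 + 4\gamma^2 n^3 \sigma^2$, where $f = \frac{1}{n}\sum_j f_j$ and $\sigma^2 = \frac{1}{n}\sum_{j=1}^n \|\nabla f_j(x) - \nabla f(x)\|^2$. -/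
/-!
Comparing each step with the gradients at the anchor `x`, `L`-smoothness gives
`‖xⁱ⁺¹ - x‖ ≤ (1 + γL)‖xⁱ - x‖ + γ‖∇fᵢ₊₁(x)‖`, and unrolling this recursion gives
`‖xⁱ - x‖ ≤ γ(1 + γL)ⁱ ∑ⱼ ‖∇fⱼ(x)‖ ≤ 2γ ∑ⱼ ‖∇fⱼ(x)‖`, because `(1 + γL)ⁿ ≤ e^{γLn} ≤ e^{1/2} ≤ 2`.
Cauchy–Schwarz turns `(∑ⱼ ‖∇fⱼ(x)‖)²` into `n ∑ⱼ ‖∇fⱼ(x)‖²`, and the bias–variance identity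
`∑ⱼ ‖∇fⱼ(x)‖² = n‖∇f(x)‖² + nσ²` finishes the proof.
-/

open Finset

theorem Fin.partialSum_le_sum {M : Type*} [AddCommMonoid M] [PartialOrder M]
    [IsOrderedAddMonoid M] {n : ℕ} {b : Fin n → M} (hb : ∀ j, 0 ≤ b j) (i : Fin (n + 1)) :
    Fin.partialSum b i ≤ ∑ j, b j := by
  rw [← List.sum_ofFn]
  exact (List.take_sublist _ _).sum_le_sum fun a ha => by
    obtain ⟨j, rfl⟩ := List.mem_ofFn.mp ha
    exact hb j

theorem Fin.le_pow_mul_partialSum_of_le_mul_add {n : ℕ} {q : ℝ} {e : Fin (n + 1) → ℝ}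
    {b : Fin n → ℝ} (hq : 1 ≤ q) (hb : ∀ j, 0 ≤ b j) (he0 : e 0 ≤ 0)
    (he : ∀ i : Fin n, e i.succ ≤ q * e i.castSucc + b i) (i : Fin (n + 1)) :
    e i ≤ q ^ (i : ℕ) * Fin.partialSum b i := by
  induction i using Fin.induction with
  | zero => simpa using he0
  | succ i ih =>
    have hpow : 1 ≤ q ^ ((i : ℕ) + 1) := one_le_pow₀ hq
    calc e i.succ ≤ q * e i.castSucc + b i := he i
      _ ≤ q * (q ^ (i : ℕ) * Fin.partialSum b i.castSucc) + q ^ ((i : ℕ) + 1) * b i := by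
        gcongr
        · simpa using ih
        · exact le_mul_of_one_le_left (hb i) hpow
      _ = q ^ ((i.succ : Fin (n + 1)) : ℕ) * Fin.partialSum b i.succ := by
        rw [Fin.partialSum_succ, Fin.val_succ, pow_succ]; ring

theorem one_add_pow_le_two {t : ℝ} {n : ℕ} (ht : 0 ≤ t) (hnt : n * t ≤ 1 / 2) :
    (1 + t) ^ n ≤ 2 := by
  have exp_half_le_two : Real.exp (1 / 2) ≤ 2 := by
    have hsq : Real.exp (1 / 2) ^ 2 = Real.exp 1 := by
      rw [← Real.exp_nat_mul]; norm_num
    nlinarith [Real.exp_one_lt_d9, Real.exp_pos (1 / 2)]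
  calc (1 + t) ^ n ≤ Real.exp t ^ n := by
        gcongr; linarith [Real.add_one_le_exp t]
    _ = Real.exp (n * t) := (Real.exp_nat_mul t n).symm
    _ ≤ Real.exp (1 / 2) := Real.exp_le_exp.mpr hnt
    _ ≤ 2 := exp_half_le_two

theorem norm_sub_smul_sub_le {E : Type*} [NormedAddCommGroup E] [NormedSpace ℝ E]
    {G : E → E} {L γ : ℝ} (hγ : 0 ≤ γ) (hG : ∀ y z, ‖G y - G z‖ ≤ L * ‖y - z‖) (y z : E) :
    ‖(y - γ • G y) - z‖ ≤ (1 + γ * L) * ‖y - z‖ + γ * ‖G z‖ := by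
  have hGy : ‖G y‖ ≤ L * ‖y - z‖ + ‖G z‖ := by
    calc ‖G y‖ = ‖(G y - G z) + G z‖ := by rw [sub_add_cancel]
      _ ≤ ‖G y - G z‖ + ‖G z‖ := norm_add_le _ _
      _ ≤ L * ‖y - z‖ + ‖G z‖ := by gcongr; exact hG y z
  calc ‖(y - γ • G y) - z‖ = ‖(y - z) - γ • G y‖ := by rw [sub_right_comm]
    _ ≤ ‖y - z‖ + γ * ‖G y‖ := by
      simpa only [norm_smul, Real.norm_of_nonneg hγ] using norm_sub_le (y - z) (γ • G y)
    _ ≤ ‖y - z‖ + γ * (L * ‖y - z‖ + ‖G z‖) := by gcongr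
    _ = (1 + γ * L) * ‖y - z‖ + γ * ‖G z‖ := by ring

theorem Finset.sum_norm_sq_eq_card_mul_norm_sq_mean_add {ι E : Type*} [NormedAddCommGroup E]
    [InnerProductSpace ℝ E] (s : Finset ι) (g : ι → E) :
    ∑ j ∈ s, ‖g j‖ ^ 2
      = #s * ‖(#s : ℝ)⁻¹ • ∑ j ∈ s, g j‖ ^ 2 + ∑ j ∈ s, ‖g j - (#s : ℝ)⁻¹ • ∑ j ∈ s, g j‖ ^ 2 := by
  set m := (#s : ℝ)⁻¹ • ∑ j ∈ s, g j
  have hinner : ∑ j ∈ s, inner ℝ (g j) m = #s * ‖m‖ ^ 2 := by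
    rcases s.eq_empty_or_nonempty with rfl | hs
    · simp
    rw [← sum_inner, ← real_inner_self_eq_norm_sq, ← real_inner_smul_left]
    congr 1
    simp only [m, smul_smul, mul_inv_cancel₀ (by positivity : (#s : ℝ) ≠ 0), one_smul]
  simp only [norm_sub_sq_real, sum_add_distrib, sum_sub_distrib, ← mul_sum, hinner, sum_const,
    nsmul_eq_mul]
  ring

theorem gradient_const_mul_sum {ι F : Type*} [NormedAddCommGroup F] [InnerProductSpace ℝ F]
    [CompleteSpace F] (s : Finset ι) (c : ℝ) {f : ι → F → ℝ} {x : F}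
    (hf : ∀ j ∈ s, DifferentiableAt ℝ (f j) x) :
    gradient (fun y => c * ∑ j ∈ s, f j y) x = c • ∑ j ∈ s, gradient (f j) x := by
  refine HasGradientAt.gradient ?_
  rw [hasGradientAt_iff_hasFDerivAt, map_smul, map_sum]
  exact (HasFDerivAt.fun_sum fun j hj => (hf j hj).hasGradientAt.hasFDerivAt).const_mul c

theorem norm_sub_le_of_incremental_steps {E : Type*} [NormedAddCommGroup E] [NormedSpace ℝ E]
    {n : ℕ} {L γ : ℝ} (hL : 0 ≤ L) (hγ : 0 ≤ γ) (hγL : n * (γ * L) ≤ 1 / 2)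
    {G : Fin n → E → E} (hG : ∀ j y z, ‖G j y - G j z‖ ≤ L * ‖y - z‖) {x : Fin (n + 1) → E}
    (hx : ∀ i : Fin n, x i.succ = x i.castSucc - γ • G i (x i.castSucc)) (i : Fin (n + 1)) :
    ‖x i - x 0‖ ≤ 2 * γ * ∑ j, ‖G j (x 0)‖ := by
  have hq : 1 ≤ 1 + γ * L := le_add_of_nonneg_right (mul_nonneg hγ hL)
  have hpow : (1 + γ * L) ^ (i : ℕ) ≤ 2 :=
    (pow_le_pow_right₀ hq (Nat.lt_succ_iff.mp i.isLt)).trans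
      (one_add_pow_le_two (mul_nonneg hγ hL) hγL)
  calc ‖x i - x 0‖
      ≤ (1 + γ * L) ^ (i : ℕ) * Fin.partialSum (fun j => γ * ‖G j (x 0)‖) i :=
        Fin.le_pow_mul_partialSum_of_le_mul_add (e := fun i => ‖x i - x 0‖) hq
          (fun j => by positivity) (by simp)
          (fun j => by simpa only [hx j] using norm_sub_smul_sub_le hγ (hG j) _ (x 0)) i
    _ ≤ (1 + γ * L) ^ (i : ℕ) * ∑ j, γ * ‖G j (x 0)‖ := by
        gcongr; exact Fin.partialSum_le_sum (fun j => by positivity) i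
    _ ≤ 2 * γ * ∑ j, ‖G j (x 0)‖ := by
        rw [← mul_sum, ← mul_assoc]; gcongr

/-- Backward per-epoch deviation bound for the Incremental Gradient method:
`∑_{i=1}^n ‖xⁱ - x‖² ≤ 4γ²n³‖∇f(x)‖² + 4γ²n³σ²`. -/
theorem ig_backward_deviation_bound
    (d n : ℕ) (L γ : ℝ) (hL : 0 < L) (hγ : 0 < γ) (hγn : γ ≤ 1 / (2 * L * n))
    (f : Fin n → EuclideanSpace ℝ (Fin d) → ℝ)
    (hd : ∀ i, Differentiable ℝ (f i))
    (hsm : ∀ i x y, ‖gradient (f i) x - gradient (f i) y‖ ≤ L * ‖x - y‖)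
    (x0 : EuclideanSpace ℝ (Fin d))
    (x : Fin (n + 1) → EuclideanSpace ℝ (Fin d)) (hx0 : x 0 = x0)
    (hx : ∀ i : Fin n, x i.succ = x i.castSucc - γ • gradient (f i) (x i.castSucc)) :
    ∑ i : Fin n, ‖x i.succ - x0‖ ^ 2
      ≤ 4 * γ ^ 2 * n ^ 3 * ‖gradient (fun y => (n : ℝ)⁻¹ * ∑ j, f j y) x0‖ ^ 2
        + 4 * γ ^ 2 * n ^ 3 *
          ((n : ℝ)⁻¹ * ∑ j, ‖gradient (f j) x0
            - gradient (fun y => (n : ℝ)⁻¹ * ∑ l, f l y) x0‖ ^ 2) := by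
  have hn : (0 : ℝ) < n := by
    rcases n.eq_zero_or_pos with rfl | hn
    · norm_num at hγn; linarith
    · exact Nat.cast_pos.mpr hn
  have hγL : n * (γ * L) ≤ 1 / 2 := by
    rw [le_div_iff₀ (by positivity)] at hγn; linarith
  set g := fun j => gradient (f j) x0
  set S := ∑ j, ‖g j‖
  have hgrad : gradient (fun y => (n : ℝ)⁻¹ * ∑ j, f j y) x0 = (n : ℝ)⁻¹ • ∑ j, g j :=
    gradient_const_mul_sum univ _ fun j _ => (hd j).differentiableAt
  have hdev : ∀ i : Fin n, ‖x i.succ - x0‖ ≤ 2 * γ * S := fun i => by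
    simpa only [hx0] using norm_sub_le_of_incremental_steps hL.le hγ.le hγL hsm hx i.succ
  have hvar := sum_norm_sq_eq_card_mul_norm_sq_mean_add univ g
  rw [card_univ, Fintype.card_fin] at hvar
  calc ∑ i : Fin n, ‖x i.succ - x0‖ ^ 2
      ≤ ∑ _i : Fin n, (2 * γ * S) ^ 2 :=
        sum_le_sum fun i _ => pow_le_pow_left₀ (norm_nonneg _) (hdev i) 2
    _ = 4 * γ ^ 2 * n * S ^ 2 := by
        rw [sum_const, card_univ, Fintype.card_fin, nsmul_eq_mul]; ring
    _ ≤ 4 * γ ^ 2 * n * (n * ∑ j, ‖g j‖ ^ 2) := by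
        gcongr; simpa using sq_sum_le_card_mul_sum_sq (s := univ) (f := fun j => ‖g j‖)
    _ = _ := by rw [hgrad, hvar]; field_simp; ring
end

section
/- Let $f : \mathbb{R}^d \to \mathbb{R}$ be $L$-smooth, lower bounded by $f_\ast$, and satisfy the Polyak-Łojasiewicz inequality $\|\nabla f(x)\|^2 \ge 2\mu(f(x)-f_\ast)$ for all $x$. Suppose a sequence $(x_t)$ satisfies $f(x_{t+1}) - f_\ast \le (f(x_t) - f_\ast) - \frac{\gamma n}{4}\|\nabla f(x_t)\|^2 + \frac{\gamma^3 L^2 n^2 B^2}{2}$ for all $t$, with $\gamma\mu n \le 2$. Then $f(x_T) - f_\ast \le (1 - \frac{\gamma\mu n}{2})^T (f(x_0) - f_\ast) + \gamma^2 \frac{L}{\mu} L n B^2$. -/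
/-- PL-case recursion solution (Theorem 4): under the Polyak–Łojasiewicz inequality
and the per-epoch decrease, `f(x_T) - f_* ≤ (1 - γμn/2)^T (f(x_0) - f_*) + γ²κLnB²`. -/
theorem pl_recursion_solution
    (d n T : ℕ) (hn : 1 ≤ n) (μ L γ B : ℝ) (hμ : 0 < μ) (hL : 0 < L)
    (hγ : 0 < γ) (hB : 0 ≤ B) (hstep : γ * μ * n ≤ 2)
    (f : EuclideanSpace ℝ (Fin d) → ℝ)
    (hd : Differentiable ℝ f)
    (hsm : ∀ x y, ‖gradient f x - gradient f y‖ ≤ L * ‖x - y‖)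
    (fstar : ℝ) (hlb : ∀ x, fstar ≤ f x)
    (hPL : ∀ x, 2 * μ * (f x - fstar) ≤ ‖gradient f x‖ ^ 2)
    (x : ℕ → EuclideanSpace ℝ (Fin d))
    (hrec : ∀ t, f (x (t + 1)) - fstar
        ≤ (f (x t) - fstar) - γ * n / 4 * ‖gradient f (x t)‖ ^ 2
          + γ ^ 3 * L ^ 2 * n ^ 2 * B ^ 2 / 2) :
    f (x T) - fstar
      ≤ (1 - γ * μ * n / 2) ^ T * (f (x 0) - fstar)
        + γ ^ 2 * (L / μ) * L * n * B ^ 2 := by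
  have hn' : (1 : ℝ) ≤ (n : ℝ) := by exact_mod_cast hn
  set r : ℝ := 1 - γ * μ * n / 2 with hr
  set C : ℝ := γ ^ 3 * L ^ 2 * n ^ 2 * B ^ 2 / 2 with hC
  have hC0 : 0 ≤ C := by positivity
  have hrpos : 0 < γ * μ * n / 2 := by positivity
  have hr0 : 0 ≤ r := by simp only [hr]; linarith
  have hr1 : r < 1 := by simp only [hr]; linarith
  -- one-step contraction
  have hstep1 : ∀ t, f (x (t + 1)) - fstar ≤ r * (f (x t) - fstar) + C := by
    intro t
    have h1 := hrec t
    have h2 := hPL (x t)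
    have h3 : 0 ≤ γ * n / 4 := by positivity
    have h4 := mul_le_mul_of_nonneg_left h2 h3
    simp only [hr, hC] at *
    nlinarith
  -- main induction
  have key : ∀ t, f (x t) - fstar ≤ r ^ t * (f (x 0) - fstar) + C * ∑ k ∈ Finset.range t, r ^ k := by
    intro t
    induction t with
    | zero => simp
    | succ t ih =>
      calc f (x (t + 1)) - fstar ≤ r * (f (x t) - fstar) + C := hstep1 t
        _ ≤ r * (r ^ t * (f (x 0) - fstar) + C * ∑ k ∈ Finset.range t, r ^ k) + C := by
            nlinarith
        _ = r ^ (t + 1) * (f (x 0) - fstar) + C * ∑ k ∈ Finset.range (t + 1), r ^ k := by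
            rw [geom_sum_succ]
            ring
  have hsum : ∑ k ∈ Finset.range T, r ^ k ≤ 1 / (1 - r) := by
    have hrT : 0 ≤ r ^ T := pow_nonneg hr0 T
    have h1r : (0:ℝ) < 1 - r := by linarith
    have heq := geom_sum_mul r T
    rw [le_div_iff₀ h1r]
    nlinarith [heq]
  have hfinal : C * ∑ k ∈ Finset.range T, r ^ k ≤ γ ^ 2 * (L / μ) * L * n * B ^ 2 := by
    have h1 : C * ∑ k ∈ Finset.range T, r ^ k ≤ C * (1 / (1 - r)) :=
      mul_le_mul_of_nonneg_left hsum hC0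
    have h2 : C * (1 / (1 - r)) = γ ^ 2 * (L / μ) * L * n * B ^ 2 := by
      simp only [hr, hC]
      field_simp
      ring
    linarith
  have := key T
  linarith
end
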